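/- arXiv:1010.0416 — 7 statements merged into one kernel-verified Lean document; each statement's English description precedes it below -/
import Mathlib

section
/- For all integers m ≥ 0 and 0 ≤ i ≤ m+1, the Boros-Moll coefficients satisfy the recurrence d_i(m+1) = ((m+i)/(m+1)) · d_{i-1}(m) + ((4m+2i+3)/(2(m+1))) · d_i(m), with the convention d_{-1}(m) = 0 and d_{m+1}(m) = 0. -/
/-!
Write `2 ^ (2m) d_i(m) = ∑ₖ w(m, k) C(k, i)` with `w(m, k) = 2^k C(2(m-k), m-k) C(m+k, k)`.
The central binomial recurrence together with a three-term binomial identity gives the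
first-order recurrence `(m+1) w(m+1, k+1) = 4(m+k+1) w(m, k) + 2(2m-2k-1) w(m, k+1)`.
Summing it against `C(k, i)` and reindexing turns `(m+1) 2^(2m+2) d_i(m+1)` into
`∑ₖ w(m, k) (4(m+k+1) C(k+1, i) + 2(2m-2k+1) C(k, i))`; Pascal's rule and the absorption
identity `(k+1) C(k, i-1) = i C(k+1, i)` then regroup this into the two terms of the recurrence.
-/

open Finset

noncomputable def d (m : ℕ) (i : ℤ) : ℝ :=
  if 0 ≤ i ∧ i ≤ (m : ℤ) then
    ((2 : ℝ) ^ (2 * m))⁻¹ *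
      ∑ k ∈ Finset.Icc i.toNat m,
        2 ^ k * (Nat.choose (2 * m - 2 * k) (m - k) : ℝ) *
          (Nat.choose (m + k) k : ℝ) * (Nat.choose k i.toNat : ℝ)
  else 0

theorem Nat.add_one_mul_choose_add_add_two {R : Type*} [CommRing R] (m k : ℕ) :
    ((m : R) + 1) * (m + k + 2).choose (k + 1)
      = 2 * ((m : R) + k + 1) * (m + k).choose k + ((m : R) - k) * (m + k + 1).choose (k + 1) := by
  have hA := congrArg (Nat.cast : ℕ → R) (Nat.add_one_mul_choose_eq (m + k) k)
  have hB := congrArg (Nat.cast : ℕ → R) (Nat.add_one_mul_choose_eq (m + k + 1) k)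
  have hP := congrArg (Nat.cast : ℕ → R) (Nat.choose_succ_succ' (m + k + 1) k)
  push_cast at hA hB hP
  linear_combination (↑m + ↑k + 2 : R) * hP + hB - 2 * hA

namespace BorosMoll

/-- The `if` matters: for `k > m` the formula alone would not vanish, since `m - k` truncates
to `0`. -/
noncomputable def weight (m k : ℕ) : ℝ :=
  if k ≤ m then 2 ^ k * (m - k).centralBinom * (m + k).choose k else 0

theorem weight_of_le {m k : ℕ} (h : k ≤ m) :
    weight m k = 2 ^ k * (m - k).centralBinom * (m + k).choose k :=
  if_pos h

theorem weight_succ_self (m : ℕ) : weight m (m + 1) = 0 :=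
  if_neg (by omega)

theorem add_one_mul_weight_succ_zero (m : ℕ) :
    ((m : ℝ) + 1) * weight (m + 1) 0 = 2 * (2 * m + 1) * weight m 0 := by
  have h := Nat.succ_mul_centralBinom_succ m
  rify at h
  rw [weight_of_le m.succ.zero_le, weight_of_le m.zero_le]
  simp only [Nat.sub_zero, Nat.add_zero, Nat.choose_zero_right]
  push_cast
  linear_combination h

theorem two_mul_sub_mul_weight_succ {m k : ℕ} (h : k ≤ m) :
    (2 * (m : ℝ) - 2 * k - 1) * weight m (k + 1)
      = (m - k) * 2 ^ k * (m - k).centralBinom * (m + k + 1).choose (k + 1) := by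
  obtain ⟨a, rfl⟩ := Nat.exists_eq_add_of_le h
  rcases a with _ | a
  · simp [weight_succ_self]
  · have hc := Nat.succ_mul_centralBinom_succ a
    rify at hc
    rw [weight_of_le (by omega), show k + (a + 1) - (k + 1) = a by omega,
      show k + (a + 1) - k = a + 1 by omega]
    push_cast
    linear_combination (-(2 : ℝ) ^ k * (k + (a + 1) + (k + 1)).choose (k + 1)) * hc

theorem add_one_mul_weight_succ_succ {m k : ℕ} (h : k ≤ m) :
    ((m : ℝ) + 1) * weight (m + 1) (k + 1)
      = 4 * ((m : ℝ) + k + 1) * weight m k + 2 * (2 * m - 2 * k - 1) * weight m (k + 1) := by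
  rw [mul_assoc 2, two_mul_sub_mul_weight_succ h, weight_of_le (by omega : k + 1 ≤ m + 1),
    weight_of_le h, show m + 1 - (k + 1) = m - k by omega,
    show m + 1 + (k + 1) = m + k + 2 by omega]
  linear_combination
    (2 * 2 ^ k * ((m - k).centralBinom : ℝ)) * Nat.add_one_mul_choose_add_add_two (R := ℝ) m k

theorem add_one_mul_sum_weight_succ (m : ℕ) (f : ℕ → ℝ) :
    ((m : ℝ) + 1) * ∑ k ∈ range (m + 1 + 1), weight (m + 1) k * f k
      = ∑ k ∈ range (m + 1),
          weight m k * (4 * ((m : ℝ) + k + 1) * f (k + 1) + 2 * (2 * m - 2 * k + 1) * f k) := by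
  set g : ℕ → ℝ := fun k ↦ 2 * (2 * m - 2 * k + 1) * weight m k * f k
  have hshift : ∑ k ∈ range (m + 1), g (k + 1) + g 0 = ∑ k ∈ range (m + 1), g k := by
    rw [← sum_range_succ', sum_range_succ]
    simp [g, weight_succ_self]
  calc ((m : ℝ) + 1) * ∑ k ∈ range (m + 1 + 1), weight (m + 1) k * f k
      = ∑ k ∈ range (m + 1), (4 * ((m : ℝ) + k + 1) * weight m k * f (k + 1) + g (k + 1))
          + g 0 := by
        rw [mul_sum, sum_range_succ']
        congr 1
        · refine sum_congr rfl fun k hk ↦ ?_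
          rw [← mul_assoc, add_one_mul_weight_succ_succ (by simpa [Nat.lt_succ_iff] using hk)]
          simp only [g]
          push_cast
          ring
        · rw [← mul_assoc, add_one_mul_weight_succ_zero]
          simp only [g]
          push_cast
          ring
    _ = _ := by
        rw [sum_add_distrib, add_assoc, hshift, ← sum_add_distrib]
        refine sum_congr rfl fun k _ ↦ ?_
        simp only [g]
        ring

/-- `2 ^ (2 * m) * d m i`, with the sum extended to all `k ≤ m` (the terms `k < i` vanish). -/
noncomputable def scaledCoeff (m i : ℕ) : ℝ :=
  ∑ k ∈ range (m + 1), weight m k * k.choose i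

theorem d_natCast (m i : ℕ) : d m i = ((2 : ℝ) ^ (2 * m))⁻¹ * scaledCoeff m i := by
  unfold d scaledCoeff
  split_ifs with h
  · rw [Int.toNat_natCast]
    congr 1
    have hsub : Icc i m ⊆ range (m + 1) := fun k hk ↦ by simp at hk ⊢; omega
    rw [← sum_subset hsub fun k hkm hki ↦ ?_]
    · refine sum_congr rfl fun k hk ↦ ?_
      rw [weight_of_le (mem_Icc.mp hk).2, Nat.centralBinom, Nat.mul_sub]
    · rw [Nat.choose_eq_zero_of_lt (by simp at hkm hki; omega), Nat.cast_zero, mul_zero]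
  · rw [sum_eq_zero fun k hk ↦ ?_, mul_zero]
    rw [Nat.choose_eq_zero_of_lt (by simp at hk; omega), Nat.cast_zero, mul_zero]

theorem scaledCoeff_succ_zero (m : ℕ) :
    ((m : ℝ) + 1) * scaledCoeff (m + 1) 0 = 2 * (4 * m + 3) * scaledCoeff m 0 := by
  rw [scaledCoeff, scaledCoeff, add_one_mul_sum_weight_succ, mul_sum]
  refine sum_congr rfl fun k _ ↦ ?_
  simp only [Nat.choose_zero_right, Nat.cast_one]
  ring

theorem scaledCoeff_succ_succ (m i : ℕ) :
    ((m : ℝ) + 1) * scaledCoeff (m + 1) (i + 1)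
      = 4 * ((m : ℝ) + i + 1) * scaledCoeff m i
        + 2 * (4 * m + 2 * i + 5) * scaledCoeff m (i + 1) := by
  simp only [scaledCoeff]
  rw [add_one_mul_sum_weight_succ, mul_sum, mul_sum, ← sum_add_distrib]
  refine sum_congr rfl fun k _ ↦ ?_
  have hA := Nat.add_one_mul_choose_eq k i
  have hP := Nat.choose_succ_succ' k i
  rify at hA hP
  linear_combination 4 * weight m k * ((m + k + 1 + i + 1) * hP + hA)

end BorosMoll

open BorosMoll in
theorem boros_moll_recu1_general (m : ℕ) (i : ℤ) (h0 : 0 ≤ i) :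
    d (m + 1) i = ((m + i : ℝ) / (m + 1)) * d m (i - 1)
      + ((4 * m + 2 * i + 3 : ℝ) / (2 * (m + 1))) * d m i := by
  lift i to ℕ using h0
  have hpow : (2 : ℝ) ^ (2 * (m + 1)) = 4 * 2 ^ (2 * m) := by ring
  rcases i with _ | i
  · have hneg : d m ((0 : ℕ) - 1) = 0 := if_neg (by omega)
    rw [hneg, d_natCast, d_natCast, hpow]
    field_simp
    linear_combination 2 * scaledCoeff_succ_zero m
  · rw [show ((i + 1 : ℕ) : ℤ) - 1 = i by push_cast; ring, d_natCast, d_natCast, d_natCast, hpow]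
    push_cast
    field_simp
    linear_combination 2 * scaledCoeff_succ_succ m i

theorem boros_moll_recu1 (m : ℕ) (i : ℤ) (h0 : 0 ≤ i) (h1 : i ≤ (m : ℤ) + 1) :
    d (m + 1) i = ((m + i : ℝ) / (m + 1)) * d m (i - 1)
      + ((4 * m + 2 * i + 3 : ℝ) / (2 * (m + 1))) * d m i :=
  boros_moll_recu1_general m i h0
end

section
/- For all integers m ≥ 0 and 0 ≤ i ≤ m+1, the Boros-Moll coefficients satisfy (m+2-i)(m+i-1) · d_{i-2}(m) − (i-1)(2m+1) · d_{i-1}(m) + i(i-1) · d_i(m) = 0, with the convention d_j(m) = 0 for j < 0 or j > m. -/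
/-!
Write `d_n(m) = 2^{-2m} ∑_{k ≤ m} w_k C(k, n)` with `w_k = 2^k C(2(m-k), m-k) C(m+k, k)`; the
binomial `C(k, n)` vanishes for `n > m`, so this holds for every natural `n`. For `i = j + 2`, the
relations `(n+1) C(k, n+1) = (k-n) C(k, n)` turn the recurrence into
`∑_k w_k ((j+1)(2k-2m-1) C(k, j+1) + (m-k)(m+k+1) C(k, j)) = 0`. This sum telescopes, with
`G_k = (j+1)(2k-2m-1) w_k C(k, j+1)`, because `w` is hypergeometric:
`(k+1)(2m-2k-1) w_{k+1} = (m-k)(m+k+1) w_k`. For `i < 2` every term vanishes.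
-/

open Finset

lemma Nat.cast_choose_succ_right_eq {R : Type*} [Ring R] (n k : ℕ) :
    (n.choose (k + 1) : R) * (k + 1) = n.choose k * ((n : R) - k) := by
  rcases le_or_gt k n with hkn | hnk
  · rw [← Nat.cast_sub hkn]
    exact_mod_cast congrArg (Nat.cast : ℕ → R) (Nat.choose_succ_right_eq n k)
  · simp [Nat.choose_eq_zero_of_lt hnk, Nat.choose_eq_zero_of_lt (hnk.trans (Nat.lt_succ_self k))]

noncomputable def borosMollWeight (m k : ℕ) : ℝ :=
  2 ^ k * (m - k).centralBinom * (m + k).choose k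

lemma borosMollWeight_succ {m k : ℕ} (hkm : k < m) :
    ((k : ℝ) + 1) * (2 * ((m : ℝ) - k) - 1) * borosMollWeight m (k + 1)
      = ((m : ℝ) - k) * (m + k + 1) * borosMollWeight m k := by
  obtain ⟨t, rfl⟩ : ∃ t, m = k + t + 1 := ⟨m - k - 1, by omega⟩
  have hcentral : ((t : ℝ) + 1) * (t + 1).centralBinom = 2 * (2 * t + 1) * t.centralBinom := by
    exact_mod_cast Nat.succ_mul_centralBinom_succ t
  have hchoose : ((2 * k + t + 1 : ℕ) + 1 : ℝ) * (2 * k + t + 1).choose k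
      = (2 * k + t + 2).choose (k + 1) * ((k : ℝ) + 1) := by
    exact_mod_cast Nat.add_one_mul_choose_eq (2 * k + t + 1) k
  simp only [borosMollWeight, show k + t + 1 - k = t + 1 by omega,
    show k + t + 1 - (k + 1) = t by omega, show k + t + 1 + k = 2 * k + t + 1 by omega,
    show k + t + 1 + (k + 1) = 2 * k + t + 2 by omega]
  push_cast at hchoose ⊢
  linear_combination (2 : ℝ) ^ k * (-2 * (2 * t + 1) * t.centralBinom * hchoose
    - (2 * k + t + 2) * (2 * k + t + 1).choose k * hcentral)

lemma sum_borosMollWeight_telescope (m j : ℕ) :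
    ∑ k ∈ range (m + 1), borosMollWeight m k *
      ((j + 1) * (2 * k - 2 * m - 1) * k.choose (j + 1) + (m - k) * (m + k + 1) * k.choose j : ℝ)
      = 0 := by
  set G : ℕ → ℝ := fun k ↦ (j + 1) * k.choose (j + 1) * borosMollWeight m k * (2 * k - 2 * m - 1)
  have hstep : ∀ k ∈ range m, borosMollWeight m k *
      ((j + 1) * (2 * k - 2 * m - 1) * k.choose (j + 1) + (m - k) * (m + k + 1) * k.choose j : ℝ)
        = G k - G (k + 1) := by
    intro k hk
    have hkm : k < m := mem_range.mp hk
    have hshift : ((k : ℝ) + 1) * k.choose j = (k + 1).choose (j + 1) * ((j : ℝ) + 1) := by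
      exact_mod_cast Nat.add_one_mul_choose_eq k j
    simp only [G]
    push_cast
    linear_combination -(k.choose j : ℝ) * borosMollWeight_succ hkm
      + (2 * m - 2 * k - 1) * borosMollWeight m (k + 1) * hshift
  rw [sum_range_succ, sum_congr rfl hstep, sum_range_sub']
  simp only [G, Nat.choose_zero_succ, Nat.cast_zero, mul_zero, zero_mul, sub_self]
  ring

lemma sum_borosMollWeight_choose_recurrence (m j : ℕ) :
    ((m : ℝ) - j) * (m + j + 1) * ∑ k ∈ range (m + 1), borosMollWeight m k * k.choose j
      - (j + 1) * (2 * m + 1) * ∑ k ∈ range (m + 1), borosMollWeight m k * k.choose (j + 1)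
      + (j + 2) * (j + 1) * ∑ k ∈ range (m + 1), borosMollWeight m k * k.choose (j + 2) = 0 := by
  rw [← sum_borosMollWeight_telescope m j, mul_sum, mul_sum, mul_sum, ← sum_sub_distrib,
    ← sum_add_distrib]
  refine sum_congr rfl fun k _ ↦ ?_
  have h₁ := Nat.cast_choose_succ_right_eq (R := ℝ) k j
  have h₂ := Nat.cast_choose_succ_right_eq (R := ℝ) k (j + 1)
  push_cast at h₂
  linear_combination borosMollWeight m k * ((j + 1) * h₂ - (k + j + 1) * h₁)

lemma d_natCast (m n : ℕ) :
    d m n = ((2 : ℝ) ^ (2 * m))⁻¹ * ∑ k ∈ range (m + 1), borosMollWeight m k * k.choose n := by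
  rw [d]
  split_ifs with hn
  · rw [Int.toNat_natCast]
    congr 1
    refine (sum_congr rfl fun k hk ↦ ?_).trans (sum_subset (fun k hk ↦ ?_) fun k hkm hk ↦ ?_)
    · rw [borosMollWeight, Nat.centralBinom_eq_two_mul_choose, Nat.mul_sub]
    · simp only [mem_Icc, mem_range] at hk ⊢
      omega
    · rw [Nat.choose_eq_zero_of_lt (by simp only [mem_Icc, mem_range] at hk hkm; omega)]
      simp
  · rw [sum_eq_zero, mul_zero]
    intro k hk
    rw [Nat.choose_eq_zero_of_lt (by simp only [mem_range] at hk; omega)]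
    simp

lemma d_of_neg (m : ℕ) {i : ℤ} (hi : i < 0) : d m i = 0 :=
  if_neg fun h ↦ hi.not_ge h.1

theorem boros_moll_recu4_general (m : ℕ) (i : ℤ) :
    ((m + 2 - i) * (m + i - 1) : ℝ) * d m (i - 2)
      - ((i - 1) * (2 * m + 1) : ℝ) * d m (i - 1)
      + (i * (i - 1) : ℝ) * d m i = 0 := by
  rcases lt_or_ge i 2 with hi | hi
  · rw [d_of_neg m (show i - 2 < 0 by omega)]
    rcases (show i < 0 ∨ i = 0 ∨ i = 1 by omega) with hneg | rfl | rfl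
    · rw [d_of_neg m (show i - 1 < 0 by omega), d_of_neg m hneg]
      ring
    · rw [d_of_neg m (show (0 : ℤ) - 1 < 0 by omega)]
      ring
    · ring
  · obtain ⟨j, rfl⟩ : ∃ j : ℕ, i = j + 2 := ⟨(i - 2).toNat, by omega⟩
    rw [show (j : ℤ) + 2 - 2 = j by ring, show (j : ℤ) + 2 - 1 = (j + 1 : ℕ) by push_cast; ring,
      show (j : ℤ) + 2 = (j + 2 : ℕ) by push_cast; ring, d_natCast, d_natCast, d_natCast]
    push_cast
    linear_combination ((2 : ℝ) ^ (2 * m))⁻¹ * sum_borosMollWeight_choose_recurrence m j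

theorem boros_moll_recu4 (m : ℕ) (i : ℤ) (h0 : 0 ≤ i) (h1 : i ≤ (m : ℤ) + 1) :
    ((m + 2 - i) * (m + i - 1) : ℝ) * d m (i - 2)
      - ((i - 1) * (2 * m + 1) : ℝ) * d m (i - 1)
      + (i * (i - 1) : ℝ) * d m i = 0 :=
  boros_moll_recu4_general m i
end

section
/- For all integers m ≥ 2 and 0 ≤ i ≤ m, the ratio d_i(m+1)/d_i(m) satisfies d_i(m+1)/d_i(m) ≤ (4m² + 7m + 3 + i·√(4m + 4i² + 1) − 2i²)/(2(m+1)(m+1-i)). -/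
open Finset

/-!
Write `S(m, i) = 4 ^ m * d_i(m)`. Creative telescoping in the summation index `k` gives two
recurrences in `m`,
  `2 (m+1) S(m+1, i+1) = 8 (m+i+1) S(m, i) + 4 (4m+2i+5) S(m, i+1)`,
  `2 (m+1) (m+1-i) S(m+1, i) = 4 (4m-2i+3) (m+i+1) S(m, i) - 8 i (i+1) S(m, i+1)`.
For `i = 0` the second one is the claim, with equality. For `i ≥ 1` the first one reduces the
claim to the bound `2 (m+i+1) (m-i) S(m, i) ≤ (i+1) (2m+1+√(4m+4(i+1)²+1)) S(m, i+1)` on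
consecutive coefficients, which is proved by induction on `m`: both recurrences write
`S(m+1, ·)` as linear combinations of `S(m, i)` and `S(m, i+1)`, so the induction step comes
down to an inequality between two square roots.
-/

noncomputable def bmWeight (m k : ℕ) : ℝ :=
  2 ^ k * ((2 * m - 2 * k).choose (m - k) : ℝ) * ((m + k).choose k : ℝ)

noncomputable def bmTerm (m k i : ℕ) : ℝ := bmWeight m k * (k.choose i : ℝ)

/-- `4 ^ m * d_i(m)`, summed from `k = 0` (the terms with `k < i` vanish). -/
noncomputable def bmSum (m i : ℕ) : ℝ := ∑ k ∈ range (m + 1), bmTerm m k i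

/-- The certificate of the creative telescoping behind `bmSum_succ_succ` and `bmSum_succ`. -/
noncomputable def bmCert (m j k : ℕ) : ℝ := bmTerm (m + 1) k (j + 1) / (m + k + 1)

lemma d_natCast_eq {m j : ℕ} (hj : j ≤ m) : d m j = bmSum m j / 4 ^ m := by
  rw [d, if_pos ⟨j.cast_nonneg, by exact_mod_cast hj⟩, Int.toNat_natCast, pow_mul,
    inv_mul_eq_div]
  norm_num only
  congr 1
  refine sum_subset (fun k hk => mem_range.2 (by grind)) fun k hk hk' => ?_
  rw [Nat.choose_eq_zero_of_lt (n := k) (k := j) (by grind), Nat.cast_zero, mul_zero]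

lemma cast_choose_succ_right (n k : ℕ) :
    ((k : ℝ) + 1) * (n.choose (k + 1) : ℝ) = ((n : ℝ) - k) * (n.choose k : ℝ) := by
  rcases le_or_gt k n with h | h
  · have := congrArg (Nat.cast : ℕ → ℝ) (Nat.choose_succ_right_eq n k)
    push_cast [Nat.cast_sub h] at this
    linarith
  · simp [Nat.choose_eq_zero_of_lt h,
      Nat.choose_eq_zero_of_lt (h.trans (Nat.lt_succ_self k))]

lemma cast_add_one_mul_choose (n k : ℕ) :
    ((n : ℝ) + 1) * (n.choose k : ℝ) = ((k : ℝ) + 1) * ((n + 1).choose (k + 1) : ℝ) := by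
  rw [mul_comm ((k : ℝ) + 1)]
  exact_mod_cast Nat.add_one_mul_choose_eq n k

lemma cast_add_one_mul_choose_left (n k : ℕ) :
    ((n : ℝ) + 1) * ((n + k + 1).choose k : ℝ)
      = ((n : ℝ) + k + 1) * ((n + k).choose k : ℝ) := by
  have h := Nat.choose_mul_succ_eq (n + k) k
  rw [show n + k + 1 - k = n + 1 by omega] at h
  rw [mul_comm, mul_comm ((n : ℝ) + k + 1)]
  exact_mod_cast h.symm

lemma bmWeight_succ_left {m k : ℕ} (hk : k ≤ m) :
    ((m : ℝ) - k + 1) * (m + 1) * bmWeight (m + 1) k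
      = 2 * (2 * ((m : ℝ) - k) + 1) * (m + k + 1) * bmWeight m k := by
  obtain ⟨n, rfl⟩ := Nat.exists_eq_add_of_le hk
  have hc := Nat.succ_mul_centralBinom_succ n
  rw [Nat.centralBinom_eq_two_mul_choose, Nat.centralBinom_eq_two_mul_choose] at hc
  have hc : ((n : ℝ) + 1) * ((2 * (n + 1)).choose (n + 1) : ℝ)
      = 2 * (2 * n + 1) * ((2 * n).choose n : ℝ) := by exact_mod_cast hc
  have hl := cast_add_one_mul_choose_left (k + n) k
  unfold bmWeight
  rw [show 2 * (k + n + 1) - 2 * k = 2 * (n + 1) by omega, show k + n + 1 - k = n + 1 by omega,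
    show 2 * (k + n) - 2 * k = 2 * n by omega, show k + n - k = n by omega,
    show k + n + 1 + k = k + n + k + 1 by omega]
  push_cast at hl ⊢
  linear_combination (2 : ℝ) ^ k * ((k : ℝ) + n + 1) * ((k + n + k + 1).choose k : ℝ) * hc
    + 2 ^ k * (2 * (2 * (n : ℝ) + 1)) * ((2 * n).choose n : ℝ) * hl

lemma bmWeight_succ_succ (m k : ℕ) :
    ((k : ℝ) + 1) * (m + 1) * bmWeight (m + 1) (k + 1)
      = 2 * ((m : ℝ) + k + 2) * (m + k + 1) * bmWeight m k := by
  have hu := cast_add_one_mul_choose (m + k + 1) k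
  have hl := cast_add_one_mul_choose_left m k
  unfold bmWeight
  rw [show 2 * (m + 1) - 2 * (k + 1) = 2 * m - 2 * k by omega,
    show m + 1 - (k + 1) = m - k by omega, show m + 1 + (k + 1) = m + k + 1 + 1 by omega]
  push_cast at hu hl ⊢
  linear_combination
    (-(2 : ℝ) ^ (k + 1) * ((2 * m - 2 * k).choose (m - k) : ℝ) * ((m : ℝ) + 1)) * hu
      + 2 ^ (k + 1) * ((2 * m - 2 * k).choose (m - k) : ℝ) * ((m : ℝ) + k + 2) * hl

lemma bmTerm_succ_left {m k : ℕ} (hk : k ≤ m) (i : ℕ) :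
    bmTerm (m + 1) k i = 2 * (2 * ((m : ℝ) - k) + 1) * (m + k + 1)
      / (((m : ℝ) - k + 1) * (m + 1)) * bmTerm m k i := by
  have hkm : (k : ℝ) ≤ m := by exact_mod_cast hk
  unfold bmTerm
  rw [div_mul_eq_mul_div, eq_div_iff (mul_pos (by linarith) (by positivity)).ne']
  linear_combination (k.choose i : ℝ) * bmWeight_succ_left hk

lemma bmTerm_succ_right (m k j : ℕ) :
    bmTerm m k (j + 1) = ((k : ℝ) - j) / (j + 1) * bmTerm m k j := by
  unfold bmTerm
  rw [div_mul_eq_mul_div, eq_div_iff (by positivity)]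
  linear_combination bmWeight m k * cast_choose_succ_right k j

lemma bmTerm_succ_succ_succ (m k j : ℕ) :
    bmTerm (m + 1) (k + 1) (j + 1) = 2 * ((m : ℝ) + k + 2) * (m + k + 1)
      / (((m : ℝ) + 1) * (j + 1)) * bmTerm m k j := by
  unfold bmTerm
  rw [div_mul_eq_mul_div, eq_div_iff (by positivity)]
  refine mul_left_cancel₀ (show (k : ℝ) + 1 ≠ 0 by positivity) ?_
  linear_combination ((k + 1).choose (j + 1) : ℝ) * (j + 1) * bmWeight_succ_succ m k
    - 2 * ((m : ℝ) + k + 2) * (m + k + 1) * bmWeight m k * cast_add_one_mul_choose k j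

lemma bmTerm_succ_succ_telescope {m k : ℕ} (hk : k ≤ m) (j : ℕ) :
    2 * ((m : ℝ) + 1) * bmTerm (m + 1) k (j + 1) - 8 * ((m : ℝ) + j + 1) * bmTerm m k j
        - 4 * (4 * (m : ℝ) + 2 * j + 5) * bmTerm m k (j + 1)
      = -4 * ((m : ℝ) + 1) * ((k + 1) * bmCert m j (k + 1) - k * bmCert m j k) := by
  have hkm : (m : ℝ) - k + 1 ≠ 0 := by
    have : (k : ℝ) ≤ m := by exact_mod_cast hk
    linarith
  unfold bmCert
  push_cast
  rw [bmTerm_succ_succ_succ, bmTerm_succ_left hk, bmTerm_succ_right]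
  field_simp
  ring

lemma bmTerm_succ_telescope {m k : ℕ} (hk : k ≤ m) (j : ℕ) :
    2 * ((m : ℝ) + 1) * (m + 1 - j) * bmTerm (m + 1) k j
        - 4 * (4 * (m : ℝ) - 2 * j + 3) * (m + j + 1) * bmTerm m k j
        + 8 * (j : ℝ) * (j + 1) * bmTerm m k (j + 1)
      = -4 * ((m : ℝ) + 1) ^ 2 * (j + 1) * (bmCert m j (k + 1) - bmCert m j k) := by
  have hkm : (m : ℝ) - k + 1 ≠ 0 := by
    have : (k : ℝ) ≤ m := by exact_mod_cast hk
    linarith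
  unfold bmCert
  push_cast
  rw [bmTerm_succ_succ_succ, bmTerm_succ_left hk, bmTerm_succ_left hk, bmTerm_succ_right]
  field_simp
  ring

lemma bmCert_zero (m j : ℕ) : bmCert m j 0 = 0 := by
  simp [bmCert, bmTerm]

lemma two_mul_bmCert_top (m j : ℕ) :
    2 * ((m : ℝ) + 1) * bmCert m j (m + 1) = bmTerm (m + 1) (m + 1) (j + 1) := by
  unfold bmCert
  push_cast
  field_simp
  ring

lemma bmSum_succ_succ (m j : ℕ) :
    2 * ((m : ℝ) + 1) * bmSum (m + 1) (j + 1)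
      = 8 * ((m : ℝ) + j + 1) * bmSum m j
        + 4 * (4 * (m : ℝ) + 2 * j + 5) * bmSum m (j + 1) := by
  have htel : ∑ k ∈ range (m + 1), (2 * ((m : ℝ) + 1) * bmTerm (m + 1) k (j + 1)
        - 8 * ((m : ℝ) + j + 1) * bmTerm m k j
        - 4 * (4 * (m : ℝ) + 2 * j + 5) * bmTerm m k (j + 1))
      = -4 * ((m : ℝ) + 1)
          * (((m + 1 : ℕ) : ℝ) * bmCert m j (m + 1) - ((0 : ℕ) : ℝ) * bmCert m j 0) := by
    rw [← sum_range_sub (fun k : ℕ => (k : ℝ) * bmCert m j k), mul_sum]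
    refine sum_congr rfl fun k hk => ?_
    rw [bmTerm_succ_succ_telescope (Nat.lt_succ_iff.mp (mem_range.mp hk))]
    push_cast
    ring
  rw [sum_sub_distrib, sum_sub_distrib, ← mul_sum, ← mul_sum, ← mul_sum] at htel
  unfold bmSum
  rw [sum_range_succ _ (m + 1)]
  push_cast at htel
  linear_combination htel - 2 * ((m : ℝ) + 1) * two_mul_bmCert_top m j

lemma bmSum_succ (m j : ℕ) :
    2 * ((m : ℝ) + 1) * (m + 1 - j) * bmSum (m + 1) j
      = 4 * (4 * (m : ℝ) - 2 * j + 3) * (m + j + 1) * bmSum m j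
        - 8 * (j : ℝ) * (j + 1) * bmSum m (j + 1) := by
  have htel : ∑ k ∈ range (m + 1), (2 * ((m : ℝ) + 1) * (m + 1 - j) * bmTerm (m + 1) k j
        - 4 * (4 * (m : ℝ) - 2 * j + 3) * (m + j + 1) * bmTerm m k j
        + 8 * (j : ℝ) * (j + 1) * bmTerm m k (j + 1))
      = -4 * ((m : ℝ) + 1) ^ 2 * (j + 1) * (bmCert m j (m + 1) - bmCert m j 0) := by
    rw [← sum_range_sub (bmCert m j), mul_sum]
    exact sum_congr rfl fun k hk =>
      bmTerm_succ_telescope (Nat.lt_succ_iff.mp (mem_range.mp hk)) j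
  rw [sum_add_distrib, sum_sub_distrib, ← mul_sum, ← mul_sum, ← mul_sum, bmCert_zero] at htel
  have htop : ((j : ℝ) + 1) * bmTerm (m + 1) (m + 1) (j + 1)
      = ((m : ℝ) + 1 - j) * bmTerm (m + 1) (m + 1) j := by
    rw [bmTerm_succ_right]
    push_cast
    field_simp
  unfold bmSum
  rw [sum_range_succ _ (m + 1)]
  linear_combination htel - 2 * ((m : ℝ) + 1) * (j + 1) * two_mul_bmCert_top m j
    - 2 * ((m : ℝ) + 1) * htop

lemma bmTerm_nonneg (m k i : ℕ) : 0 ≤ bmTerm m k i := by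
  unfold bmTerm bmWeight
  positivity

lemma bmSum_pos {m j : ℕ} (hj : j ≤ m) : 0 < bmSum m j := by
  refine sum_pos' (fun k _ => bmTerm_nonneg m k j) ⟨m, self_mem_range_succ m, ?_⟩
  have := Nat.choose_pos (le_add_right le_rfl : m ≤ m + m)
  have := Nat.choose_pos hj
  simp only [bmTerm, bmWeight, Nat.sub_self, Nat.choose_self]
  positivity

lemma bmSum_eq_zero {m j : ℕ} (hj : m < j) : bmSum m j = 0 :=
  sum_eq_zero fun k hk => by
    simp [bmTerm, Nat.choose_eq_zero_of_lt ((mem_range.1 hk).trans_le hj)]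

lemma ratio_bound_step_ineq (m i : ℝ) (hi : 1 ≤ i) (him : i ≤ m) :
    ((m + i + 1) * (4 * m - 2 * i + 5) - i * (2 * m + 3 + √(4 * (m + 1) + 4 * i ^ 2 + 1)))
        * (2 * m + 1 + √(4 * m + 4 * i ^ 2 + 1))
      ≤ (m + 1 - i) * (4 * (i - 1) * (m + i + 1)
          + (2 * m + 3 + √(4 * (m + 1) + 4 * i ^ 2 + 1)) * (4 * m + 2 * i + 3)) := by
  set s := √(4 * m + 4 * i ^ 2 + 1)
  set t := √(4 * (m + 1) + 4 * i ^ 2 + 1)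
  have hi0 : 0 < i := by linarith
  have hm0 : 0 < m := by linarith
  have hs2 : s ^ 2 = 4 * m + 4 * i ^ 2 + 1 := Real.sq_sqrt (by positivity)
  have ht2 : t ^ 2 = s ^ 2 + 4 := by rw [hs2, Real.sq_sqrt (by positivity)]; ring
  have hs : 0 < s := Real.sqrt_pos.2 (by positivity)
  have hst : s ≤ t := Real.sqrt_le_sqrt (by linarith)
  have hst' : s * t ≤ s ^ 2 + 2 := by nlinarith [sq_nonneg (t - s)]
  set c := 4 * m ^ 2 + 7 * m + 3 - 2 * i ^ 2
  suffices 0 ≤ i - 4 * i ^ 3 + c * t - (c + 2 * m + 2) * s + i * s * t by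
    linear_combination this
  have hsq : 2 * i ^ 2 * (2 * m + 3) - (m + 1) ≤ 2 * i * (m + 1) * s := by
    refine (abs_le_of_sq_le_sq' ?_ (by positivity)).2
    rw [mul_pow, hs2]
    nlinarith [mul_nonneg (sub_nonneg.2 him) (sub_nonneg.2 hi), sq_nonneg (m * i - i ^ 2),
      mul_nonneg (mul_nonneg (sub_nonneg.2 him) (sub_nonneg.2 hi)) (sub_nonneg.2 hi)]
  -- times `t + s`, with `t ^ 2 = s ^ 2 + 4`, `t` enters only positively and `s * t` only negatively
  have hlow : 4 * (2 * i * (m + 1) * s + (m + 1) - 2 * i ^ 2 * (2 * m + 3))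
      ≤ (i - 4 * i ^ 3 + c * t - (c + 2 * m + 2) * s + i * s * t) * (t + s) :=
    calc 4 * (2 * i * (m + 1) * s + (m + 1) - 2 * i ^ 2 * (2 * m + 3))
        = 4 * c + 4 * i * s + 2 * i * (2 * m + 1) * (2 * s) - (2 * m + 2) * (2 * s ^ 2 + 2) := by
          linear_combination 4 * (m + 1) * hs2
      _ ≤ 4 * c + 4 * i * s + 2 * i * (2 * m + 1) * (t + s) - (2 * m + 2) * (s * t + s ^ 2) := by
          nlinarith [mul_le_mul_of_nonneg_left hst (by positivity : 0 ≤ 2 * i * (2 * m + 1))]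
      _ = _ := by linear_combination (-(c + i * s)) * ht2 - i * (t + s) * hs2
  exact nonneg_of_mul_nonneg_left (b := t + s) (by linarith) (by linarith)

/-- Both recurrences write `bmSum (m + 1)` at `j` and `j + 1` in terms of `X = bmSum m j` and
`Y = bmSum m (j + 1)`, which turns the claim into `4 (m+j+1) P X ≤ Q Y`; when `P > 0` this
follows from `ih` and `ratio_bound_step_ineq`. -/
lemma bmSum_ratio_le_succ {m j : ℕ} (hj : j < m)
    (ih : 2 * ((m : ℝ) + j + 1) * (m - j) * bmSum m j
      ≤ (j + 1) * (2 * m + 1 + √(4 * m + 4 * ((j : ℝ) + 1) ^ 2 + 1)) * bmSum m (j + 1)) :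
    2 * ((m : ℝ) + j + 2) * (m + 1 - j) * bmSum (m + 1) j
      ≤ (j + 1) * (2 * m + 3 + √(4 * ((m : ℝ) + 1) + 4 * ((j : ℝ) + 1) ^ 2 + 1))
          * bmSum (m + 1) (j + 1) := by
  have hjm : (j : ℝ) + 1 ≤ m := by exact_mod_cast hj
  have hX := (bmSum_pos hj.le).le
  have hY := (bmSum_pos hj).le
  have hkey :=
    ratio_bound_step_ineq (m : ℝ) ((j : ℝ) + 1) (le_add_of_nonneg_left j.cast_nonneg) hjm
  set s := √(4 * (m : ℝ) + 4 * ((j : ℝ) + 1) ^ 2 + 1)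
  set t := √(4 * ((m : ℝ) + 1) + 4 * ((j : ℝ) + 1) ^ 2 + 1)
  have ht : 0 ≤ t := Real.sqrt_nonneg _
  set P := ((m : ℝ) + j + 2) * (4 * m - 2 * j + 3) - (j + 1) * (2 * m + 3 + t)
  set Q := 8 * (j : ℝ) * (j + 1) * (m + j + 2)
    + 2 * ((j : ℝ) + 1) * (2 * m + 3 + t) * (4 * m + 2 * j + 5)
  have hcross : 4 * ((m : ℝ) + j + 1) * P * bmSum m j ≤ Q * bmSum m (j + 1) := by
    rcases le_or_gt P 0 with hP | hP
    · have hQ : 0 ≤ Q * bmSum m (j + 1) := by positivity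
      nlinarith [mul_nonneg (mul_nonneg (by positivity : (0 : ℝ) ≤ 4 * ((m : ℝ) + j + 1))
        (neg_nonneg.2 hP)) hX]
    · refine le_of_mul_le_mul_left ?_ (show (0 : ℝ) < m - j by linarith)
      have h1 := mul_le_mul_of_nonneg_left ih (by positivity : (0 : ℝ) ≤ 2 * P)
      have h2 := mul_le_mul_of_nonneg_right hkey
        (by positivity : (0 : ℝ) ≤ 2 * ((j : ℝ) + 1) * bmSum m (j + 1))
      ring_nf at h1 h2 ⊢
      linarith
  have hdiff : 2 * ((m : ℝ) + 1) * ((j + 1) * (2 * m + 3 + t) * bmSum (m + 1) (j + 1)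
        - 2 * ((m : ℝ) + j + 2) * (m + 1 - j) * bmSum (m + 1) j)
      = 2 * (Q * bmSum m (j + 1) - 4 * ((m : ℝ) + j + 1) * P * bmSum m j) := by
    linear_combination ((j : ℝ) + 1) * (2 * m + 3 + t) * bmSum_succ_succ m j
      - 2 * ((m : ℝ) + j + 2) * bmSum_succ m j
  have hpos : (0 : ℝ) < 2 * ((m : ℝ) + 1) := by positivity
  exact sub_nonneg.1 ((mul_nonneg_iff_of_pos_left hpos).1 (by rw [hdiff]; linarith))

lemma bmSum_ratio_le : ∀ {m j : ℕ}, j < m →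
    2 * ((m : ℝ) + j + 1) * (m - j) * bmSum m j
      ≤ (j + 1) * (2 * m + 1 + √(4 * m + 4 * ((j : ℝ) + 1) ^ 2 + 1)) * bmSum m (j + 1)
  | 0, _, hj => absurd hj (Nat.not_lt_zero _)
  | m + 1, j, hj => by
    rcases Nat.lt_succ_iff_lt_or_eq.1 hj with hj | rfl
    · push_cast
      linear_combination bmSum_ratio_le_succ hj (bmSum_ratio_le hj)
    · have hR1 := bmSum_succ_succ j j
      have hR2 := bmSum_succ j j
      rw [bmSum_eq_zero (Nat.lt_succ_self j)] at hR1 hR2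
      push_cast
      rw [show 4 * ((j : ℝ) + 1) + 4 * ((j : ℝ) + 1) ^ 2 + 1 = (2 * j + 3) ^ 2 by ring,
        Real.sqrt_sq (by positivity)]
      linear_combination 2 * hR2 - (2 * (j : ℝ) + 3) * hR1

lemma bmSum_succ_le {m j : ℕ} (hj : j ≤ m) :
    2 * ((m : ℝ) + 1) * (m + 1 - j) * bmSum (m + 1) j
      ≤ 4 * (4 * (m : ℝ) ^ 2 + 7 * m + 3 + j * √(4 * m + 4 * (j : ℝ) ^ 2 + 1) - 2 * j ^ 2)
          * bmSum m j := by
  rcases j with _ | j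
  · have := bmSum_succ m 0
    simp only [CharP.cast_eq_zero, mul_zero, zero_mul, sub_zero, zero_add] at this ⊢
    linear_combination this
  · push_cast
    linear_combination ((m : ℝ) - j) * bmSum_succ_succ m j + 4 * bmSum_ratio_le hj

theorem chen_gu_upper_bound_general (m : ℕ) (i : ℤ) (h0 : 0 ≤ i) (h1 : i ≤ (m : ℤ)) :
    d (m + 1) i / d m i ≤
      (4 * m ^ 2 + 7 * m + 3 + i * Real.sqrt (4 * m + 4 * i ^ 2 + 1) - 2 * i ^ 2) /
        (2 * (m + 1) * (m + 1 - i)) := by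
  lift i to ℕ using h0
  have hi : i ≤ m := by exact_mod_cast h1
  have hpos := bmSum_pos hi
  have hratio : d (m + 1) i / d m i = bmSum (m + 1) i / (4 * bmSum m i) := by
    rw [d_natCast_eq hi, d_natCast_eq (by omega), pow_succ]
    field_simp
  have hden : (0 : ℝ) < 2 * (m + 1) * (m + 1 - i) := by
    have : (i : ℝ) ≤ m := by exact_mod_cast hi
    nlinarith
  push_cast
  rw [hratio, div_le_div_iff₀ (by positivity) hden]
  linear_combination bmSum_succ_le hi

theorem chen_gu_upper_bound (m : ℕ) (i : ℤ) (hm : 2 ≤ m) (h0 : 0 ≤ i) (h1 : i ≤ (m : ℤ)) :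
    d (m + 1) i / d m i ≤
      (4 * m ^ 2 + 7 * m + 3 + i * Real.sqrt (4 * m + 4 * i ^ 2 + 1) - 2 * i ^ 2) /
        (2 * (m + 1) * (m + 1 - i)) :=
  chen_gu_upper_bound_general m i h0 h1
end

section
/- For all integers m ≥ 2 and 1 ≤ i ≤ m, the Boros-Moll coefficients are log-concave: d_i(m)² − d_{i-1}(m)·d_{i+1}(m) > 0, with the convention d_{m+1}(m) = 0. -/
open Finset

/-!
Clearing the factor `2 ^ (-2m)`, the numbers `b_i(m) = 2 ^ (2m) d_i(m)` satisfy the recurrence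
`(m + 1) b_i(m + 1) = 4 (m + i) b_{i-1}(m) + 2 (4m + 2i + 3) b_i(m)`, which comes from a recurrence
in `m` for the coefficients of `P_m` in powers of `a + 1`. The coefficients `4 (m + i)` and
`2 (4m + 2i + 3)` are affine in `i` with the same slope `t = 4`, and for such combinations
`((a + t) x + (b + t) y) ^ 2 - (a x + b y) ((a + 2t) x + (b + 2t) y) = t ^ 2 (x + y) ^ 2 > 0`.
Together with the log-concavity of `b(m)`, this propagates strict log-concavity from `m` to `m + 1`,
by induction starting from the empty range at `m = 0`.
-/

theorem cast_choose_succ_right_mul (n k : ℕ) :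
    ((n.choose (k + 1) : ℕ) : ℝ) * (k + 1) = n.choose k * ((n : ℝ) - k) := by
  rcases lt_or_ge n k with h | h
  · simp [Nat.choose_eq_zero_of_lt h, Nat.choose_eq_zero_of_lt (Nat.lt_succ_of_lt h)]
  · rw [← Nat.cast_sub h]
    exact_mod_cast Nat.choose_succ_right_eq n k

theorem add_one_mul_choose_add_two (m j : ℕ) :
    ((m : ℝ) + 1) * (m + j + 2).choose (j + 1) =
      2 * ((m : ℝ) + j + 1) * (m + j).choose j
        + ((m : ℝ) - j) * (m + j + 1).choose (j + 1) := by
  have r1 : ((m : ℝ) + j + 1) * (m + j).choose j =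
      (m + j + 1).choose (j + 1) * ((j : ℝ) + 1) := by
    exact_mod_cast Nat.add_one_mul_choose_eq (m + j) j
  have r2 : ((m : ℝ) + j + 2) * (m + j + 1).choose j =
      (m + j + 2).choose (j + 1) * ((j : ℝ) + 1) := by
    exact_mod_cast Nat.add_one_mul_choose_eq (m + j + 1) j
  have r3 : ((m + j).choose j : ℝ) * ((m : ℝ) + j + 1) =
      (m + j + 1).choose j * ((m : ℝ) + 1) := by
    have := Nat.choose_mul_succ_eq (m + j) j
    rw [show m + j + 1 - j = m + 1 by omega] at this
    exact_mod_cast this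
  apply mul_right_cancel₀ (by positivity : (j : ℝ) + 1 ≠ 0)
  linear_combination (-((m : ℝ) + 1)) * r2 - ((m : ℝ) + j + 2) * r3 + ((m : ℝ) - j) * r1

/-- `bmShifted m j` is the coefficient of `(a + 1) ^ j` in `2 ^ (2 * m) * P_m(a)`, where
`P_m(a) = ∑ i, d_i(m) a ^ i`. The guard `j ≤ m` replaces the junk value of the truncated
subtractions for `j > m` by `0`, so that the recurrences below hold for every `j`. -/
noncomputable def bmShifted (m j : ℕ) : ℝ :=
  if j ≤ m then 2 ^ j * (m - j).centralBinom * (m + j).choose j else 0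

/-- `bmScaled m i = 2 ^ (2 * m) * d_i(m)` (see `d_natCast`). -/
noncomputable def bmScaled (m i : ℕ) : ℝ :=
  ∑ j ∈ range (m + 1), bmShifted m j * j.choose i

theorem bmShifted_nonneg (m j : ℕ) : 0 ≤ bmShifted m j := by
  unfold bmShifted; split_ifs <;> positivity

theorem bmShifted_pos {m j : ℕ} (h : j ≤ m) : 0 < bmShifted m j := by
  have := Nat.centralBinom_pos (m - j)
  have := Nat.choose_pos (Nat.le_add_left j m)
  rw [bmShifted, if_pos h]
  positivity

theorem bmShifted_eq_zero_of_lt {m j : ℕ} (h : m < j) : bmShifted m j = 0 :=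
  if_neg (Nat.not_le.2 h)

theorem cast_succ_mul_centralBinom_succ (n : ℕ) :
    ((n : ℝ) + 1) * (n + 1).centralBinom = 2 * (2 * (n : ℝ) + 1) * n.centralBinom := by
  exact_mod_cast Nat.succ_mul_centralBinom_succ n

theorem bmShifted_succ_zero (m : ℕ) :
    ((m : ℝ) + 1) * bmShifted (m + 1) 0 = 2 * (2 * (m : ℝ) + 1) * bmShifted m 0 := by
  simp only [bmShifted, zero_le, if_true, pow_zero, one_mul, Nat.sub_zero, add_zero,
    Nat.choose_zero_right, Nat.cast_one, mul_one]
  exact cast_succ_mul_centralBinom_succ m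

theorem bmShifted_succ_succ (m j : ℕ) :
    ((m : ℝ) + 1) * bmShifted (m + 1) (j + 1) =
      4 * ((m : ℝ) + j + 1) * bmShifted m j
        + 2 * (2 * (m : ℝ) - 2 * j - 1) * bmShifted m (j + 1) := by
  rcases lt_trichotomy j m with hj | rfl | hj
  · obtain ⟨n, rfl⟩ := Nat.exists_eq_add_of_lt hj
    simp only [bmShifted, if_pos (by omega : j + 1 ≤ j + n + 1 + 1),
      if_pos (by omega : j ≤ j + n + 1), if_pos (by omega : j + 1 ≤ j + n + 1),
      show j + n + 1 + 1 - (j + 1) = n + 1 by omega,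
      show j + n + 1 - j = n + 1 by omega, show j + n + 1 - (j + 1) = n by omega]
    rw [show j + n + 1 + 1 + (j + 1) = j + n + 1 + j + 2 by ring,
      show j + n + 1 + (j + 1) = j + n + 1 + j + 1 by ring]
    have hc := cast_succ_mul_centralBinom_succ n
    have hb := add_one_mul_choose_add_two (j + n + 1) j
    push_cast at hb ⊢
    linear_combination 2 ^ (j + 1) * ((n + 1).centralBinom : ℝ) * hb
      + 2 ^ (j + 1) * ((j + n + 1 + j + 1).choose (j + 1) : ℝ) * hc
  · simp only [bmShifted, le_refl, if_true, if_neg (by omega : ¬ j + 1 ≤ j), Nat.sub_self]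
    rw [Nat.centralBinom_zero, ← Nat.two_mul, ← Nat.two_mul,
      ← Nat.centralBinom_eq_two_mul_choose, ← Nat.centralBinom_eq_two_mul_choose]
    have hc := cast_succ_mul_centralBinom_succ j
    push_cast
    linear_combination 2 ^ (j + 1) * hc
  · rw [bmShifted_eq_zero_of_lt hj, bmShifted_eq_zero_of_lt (by omega : m < j + 1),
      bmShifted_eq_zero_of_lt (by omega : m + 1 < j + 1)]
    ring

theorem bmScaled_nonneg (m i : ℕ) : 0 ≤ bmScaled m i :=
  sum_nonneg fun j _ => mul_nonneg (bmShifted_nonneg m j) (Nat.cast_nonneg _)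

theorem bmScaled_pos {m i : ℕ} (h : i ≤ m) : 0 < bmScaled m i := by
  refine sum_pos' (fun j _ => mul_nonneg (bmShifted_nonneg m j) (Nat.cast_nonneg _))
    ⟨m, self_mem_range_succ m, mul_pos (bmShifted_pos le_rfl) ?_⟩
  exact_mod_cast Nat.choose_pos h

theorem bmScaled_eq_zero_of_lt {m i : ℕ} (h : m < i) : bmScaled m i = 0 :=
  sum_eq_zero fun j hj => by
    rw [Nat.choose_eq_zero_of_lt (by rw [mem_range] at hj; omega), Nat.cast_zero, mul_zero]

theorem d_natCast_s7 (m i : ℕ) : d m i = ((2 : ℝ) ^ (2 * m))⁻¹ * bmScaled m i := by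
  rcases le_or_gt i m with h | h
  · rw [d, if_pos ⟨Int.natCast_nonneg i, Int.ofNat_le.2 h⟩, Int.toNat_natCast, bmScaled]
    congr 1
    rw [← sum_subset (fun k hk => mem_range_succ_iff.2 (mem_Icc.1 hk).2)]
    · refine sum_congr rfl fun k hk => ?_
      rw [bmShifted, if_pos (mem_Icc.1 hk).2, Nat.centralBinom_eq_two_mul_choose, Nat.mul_sub]
    · intro k hkm hk
      rw [mem_range_succ_iff] at hkm
      rw [Nat.choose_eq_zero_of_lt (by simp only [mem_Icc] at hk; omega), Nat.cast_zero, mul_zero]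
  · rw [d, if_neg (by omega), bmScaled_eq_zero_of_lt h, mul_zero]

theorem bmScaled_succ (m i : ℕ) :
    ((m : ℝ) + 1) * bmScaled (m + 1) i =
      ∑ j ∈ range (m + 1), bmShifted m j *
        (4 * ((m : ℝ) + j + 1) * (j + 1).choose i
          + 2 * (2 * (m : ℝ) - 2 * j + 1) * j.choose i) := by
  set g : ℕ → ℝ := fun j => 2 * (2 * (m : ℝ) - 2 * j + 1) * bmShifted m j * j.choose i
  have hshift : ∑ j ∈ range (m + 1), g (j + 1) + g 0 = ∑ j ∈ range (m + 1), g j := by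
    rw [← sum_range_succ', sum_range_succ, add_eq_left]
    simp [g, bmShifted_eq_zero_of_lt]
  have hzero : ((m : ℝ) + 1) * (bmShifted (m + 1) 0 * (0 : ℕ).choose i) = g 0 := by
    rw [← mul_assoc, bmShifted_succ_zero]
    simp only [g]
    push_cast
    ring
  have hsucc : ∀ j : ℕ, ((m : ℝ) + 1) * (bmShifted (m + 1) (j + 1) * (j + 1).choose i) =
      4 * ((m : ℝ) + j + 1) * bmShifted m j * (j + 1).choose i + g (j + 1) := by
    intro j
    rw [← mul_assoc, bmShifted_succ_succ]
    simp only [g]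
    push_cast
    ring
  rw [bmScaled, mul_sum, sum_range_succ', hzero, sum_congr rfl fun j _ => hsucc j,
    sum_add_distrib, add_assoc, hshift, ← sum_add_distrib]
  exact sum_congr rfl fun j _ => by simp only [g]; ring

theorem bmScaled_succ_zero (m : ℕ) :
    ((m : ℝ) + 1) * bmScaled (m + 1) 0 = 2 * (4 * (m : ℝ) + 3) * bmScaled m 0 := by
  rw [bmScaled_succ, bmScaled, mul_sum]
  exact sum_congr rfl fun j _ => by simp only [Nat.choose_zero_right, Nat.cast_one]; ring

theorem bmScaled_succ_succ (m i : ℕ) :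
    ((m : ℝ) + 1) * bmScaled (m + 1) (i + 1) =
      4 * ((m : ℝ) + i + 1) * bmScaled m i
        + 2 * (4 * (m : ℝ) + 2 * i + 5) * bmScaled m (i + 1) := by
  rw [bmScaled_succ, bmScaled, bmScaled, mul_sum, mul_sum, ← sum_add_distrib]
  refine sum_congr rfl fun j _ => ?_
  have hpascal : ((j + 1).choose (i + 1) : ℝ) = j.choose i + j.choose (i + 1) := by
    exact_mod_cast Nat.choose_succ_succ j i
  linear_combination bmShifted m j *
    (4 * ((m : ℝ) + j + 1) * hpascal - 4 * cast_choose_succ_right_mul j i)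

theorem mul_lt_sq_of_affine {a b t w x y z : ℝ} (ha : 0 ≤ a) (hb : 0 ≤ b) (ht : 0 < t)
    (hx : 0 < x) (hy : 0 < y) (hz : 0 ≤ z) (hwxy : w * y ≤ x ^ 2) (hxyz : x * z < y ^ 2) :
    (a * w + b * x) * ((a + 2 * t) * y + (b + 2 * t) * z) < ((a + t) * x + (b + t) * y) ^ 2 := by
  have h1 : (a * w + b * x) * y ≤ (a * x + b * y) * x := by nlinarith
  have h2 : ((a + 2 * t) * y + (b + 2 * t) * z) * x ≤
      ((a + 2 * t) * x + (b + 2 * t) * y) * y := by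
    nlinarith
  have h12 := mul_le_mul h1 h2 (by positivity) (by positivity)
  have hxy : 0 < x * y := mul_pos hx hy
  refine lt_of_mul_lt_mul_right (a := x * y) ?_ hxy.le
  calc (a * w + b * x) * ((a + 2 * t) * y + (b + 2 * t) * z) * (x * y)
      ≤ (a * x + b * y) * ((a + 2 * t) * x + (b + 2 * t) * y) * (x * y) := by linarith
    _ < (a * x + b * y) * ((a + 2 * t) * x + (b + 2 * t) * y) * (x * y)
          + t ^ 2 * (x + y) ^ 2 * (x * y) := by
        have : 0 < t ^ 2 * (x + y) ^ 2 * (x * y) := by positivity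
        linarith
    _ = ((a + t) * x + (b + t) * y) ^ 2 * (x * y) := by ring

theorem bmScaled_mul_lt_sq {m q : ℕ} (hq : q < m) :
    bmScaled m q * bmScaled m (q + 2) < bmScaled m (q + 1) ^ 2 := by
  induction m generalizing q with
  | zero => omega
  | succ m ih =>
    rcases Nat.lt_succ_iff_lt_or_eq.1 hq with hq | rfl
    · -- `w` stands for `bmScaled m (q - 1)`, which is absent (zero) when `q = 0`.
      obtain ⟨w, hwxy, hw⟩ : ∃ w, w * bmScaled m (q + 1) ≤ bmScaled m q ^ 2 ∧
          ((m : ℝ) + 1) * bmScaled (m + 1) q =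
            4 * ((m : ℝ) + q) * w + 2 * (4 * (m : ℝ) + 2 * q + 3) * bmScaled m q := by
        rcases q with _ | q
        · exact ⟨0, by rw [zero_mul]; positivity, by rw [bmScaled_succ_zero]; push_cast; ring⟩
        · exact ⟨bmScaled m q, (ih (by omega)).le, by rw [bmScaled_succ_succ]; push_cast; ring⟩
      have key := mul_lt_sq_of_affine (a := 4 * ((m : ℝ) + q))
        (b := 2 * (4 * (m : ℝ) + 2 * q + 3)) (by positivity) (by positivity) four_pos
        (bmScaled_pos (by omega : q ≤ m)) (bmScaled_pos (by omega : q + 1 ≤ m))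
        (bmScaled_nonneg m (q + 2)) hwxy (ih hq)
      have h2 := bmScaled_succ_succ m (q + 1)
      push_cast at h2
      refine lt_of_mul_lt_mul_left (a := ((m : ℝ) + 1) ^ 2) ?_ (by positivity)
      calc ((m : ℝ) + 1) ^ 2 * (bmScaled (m + 1) q * bmScaled (m + 1) (q + 2))
          = ((m : ℝ) + 1) * bmScaled (m + 1) q
              * (((m : ℝ) + 1) * bmScaled (m + 1) (q + 2)) := by ring
        _ < _ := by rw [hw, h2]; convert key using 2; ring
        _ = (((m : ℝ) + 1) * bmScaled (m + 1) (q + 1)) ^ 2 := by rw [bmScaled_succ_succ]; ring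
        _ = ((m : ℝ) + 1) ^ 2 * bmScaled (m + 1) (q + 1) ^ 2 := by ring
    · rw [bmScaled_eq_zero_of_lt (by omega : q + 1 < q + 2), mul_zero]
      exact pow_pos (bmScaled_pos le_rfl) 2

theorem boros_moll_log_concave_general (m : ℕ) (i : ℤ) (h0 : 1 ≤ i) (h1 : i ≤ (m : ℤ)) :
    0 < d m i ^ 2 - d m (i - 1) * d m (i + 1) := by
  obtain ⟨q, rfl⟩ : ∃ q : ℕ, i = q + 1 := ⟨(i - 1).toNat, by omega⟩
  have hlc := bmScaled_mul_lt_sq (by omega : q < m)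
  rw [show (q : ℤ) + 1 + 1 = ((q + 2 : ℕ) : ℤ) by push_cast; ring, add_sub_cancel_right,
    show (q : ℤ) + 1 = ((q + 1 : ℕ) : ℤ) by push_cast; ring, d_natCast_s7, d_natCast_s7, d_natCast_s7]
  calc (0 : ℝ) < ((2 : ℝ) ^ (2 * m))⁻¹ ^ 2 *
        (bmScaled m (q + 1) ^ 2 - bmScaled m q * bmScaled m (q + 2)) :=
      mul_pos (by positivity) (sub_pos.2 hlc)
    _ = _ := by ring

theorem boros_moll_log_concave (m : ℕ) (i : ℤ) (hm : 2 ≤ m) (h0 : 1 ≤ i) (h1 : i ≤ (m : ℤ)) :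
    0 < d m i ^ 2 - d m (i - 1) * d m (i + 1) :=
  boros_moll_log_concave_general m i h0 h1
end

section
/- For all real numbers m ≥ 2 and i with 1 ≤ i ≤ m−1, the polynomial identity (2i²m + 4im² + 2m³ + i² + 24m + 14im + 13m² + 6i + 9)²·(4i² + 4m + 1) − (−4i³m − 8i²m² − 4im³ − 20i²m − 24im² − 4m³ + 7i² − 28im − 19m² + 20i − 20m + 7)² > 0 holds. -/
theorem poly_ineq (m i : ℝ) (hm : 2 ≤ m) (h0 : 1 ≤ i) (h1 : i ≤ m - 1) :
    0 < (2 * i ^ 2 * m + 4 * i * m ^ 2 + 2 * m ^ 3 + i ^ 2 + 24 * m + 14 * i * m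
          + 13 * m ^ 2 + 6 * i + 9) ^ 2 * (4 * i ^ 2 + 4 * m + 1)
        - (-4 * i ^ 3 * m - 8 * i ^ 2 * m ^ 2 - 4 * i * m ^ 3 - 20 * i ^ 2 * m
          - 24 * i * m ^ 2 - 4 * m ^ 3 + 7 * i ^ 2 - 28 * i * m - 19 * m ^ 2
          + 20 * i - 20 * m + 7) ^ 2 := by
  have ha : (0:ℝ) ≤ i - 1 := by linarith
  have hc : (0:ℝ) ≤ m - 1 - i := by linarith
  have key : (2 * i ^ 2 * m + 4 * i * m ^ 2 + 2 * m ^ 3 + i ^ 2 + 24 * m + 14 * i * m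
          + 13 * m ^ 2 + 6 * i + 9) ^ 2 * (4 * i ^ 2 + 4 * m + 1)
        - (-4 * i ^ 3 * m - 8 * i ^ 2 * m ^ 2 - 4 * i * m ^ 3 - 20 * i ^ 2 * m
          - 24 * i * m ^ 2 - 4 * m ^ 3 + 7 * i ^ 2 - 28 * i * m - 19 * m ^ 2
          + 20 * i - 20 * m + 7) ^ 2 = 278316 + 466128 * (m-1-i)^1 + 339084 * (m-1-i)^2 + 140640 * (m-1-i)^3 + 35548 * (m-1-i)^4 + 5400 * (m-1-i)^5 + 452 * (m-1-i)^6 + 16 * (m-1-i)^7 + 765720 * (i-1)^1 + 1055448 * (i-1)^1 * (m-1-i)^1 + 612180 * (i-1)^1 * (m-1-i)^2 + 194516 * (i-1)^1 * (m-1-i)^3 + 35552 * (i-1)^1 * (m-1-i)^4 + 3504 * (i-1)^1 * (m-1-i)^5 + 144 * (i-1)^1 * (m-1-i)^6 + 920556 * (i-1)^2 + 1020552 * (i-1)^2 * (m-1-i)^1 + 454332 * (i-1)^2 * (m-1-i)^2 + 103520 * (i-1)^2 * (m-1-i)^3 + 12096 * (i-1)^2 * (m-1-i)^4 + 576 * (i-1)^2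 * (m-1-i)^5 + 623760 * (i-1)^3 + 537584 * (i-1)^3 * (m-1-i)^1 + 173168 * (i-1)^3 * (m-1-i)^2 + 25200 * (i-1)^3 * (m-1-i)^3 + 1408 * (i-1)^3 * (m-1-i)^4 + 255936 * (i-1)^4 + 161920 * (i-1)^4 * (m-1-i)^1 + 33792 * (i-1)^4 * (m-1-i)^2 + 2368 * (i-1)^4 * (m-1-i)^3 + 63296 * (i-1)^5 + 26304 * (i-1)^5 * (m-1-i)^1 + 2688 * (i-1)^5 * (m-1-i)^2 + 8704 * (i-1)^6 + 1792 * (i-1)^6 * (m-1-i)^1 + 512 * (i-1)^7 := by ring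
  rw [key]
  have h278316 : (0:ℝ) < 278316 := by norm_num
  positivity
end

section
/- Let P(m,i) = 4i⁶ + 4i³m³ − 2m⁵ + 38i³m² − 9m⁴ + 14i²m³ − 11m³ + 12i⁵m + 18i⁵ + 44i⁴m + 21i⁴ − 10i³ + 60i³m + 35i²m − 21im + 12i⁴m² + 64i²m² − 10m² − 22m + 16im³ + 34im² − 27i² − 6i. Then P(m,i) > 0 for all real m ≥ 2 and (m²/2)^{1/3} ≤ i ≤ m^{2/3}. -/
theorem P_pos (m i : ℝ) (hm : 2 ≤ m)
    (h0 : (m ^ 2 / 2) ^ ((1 : ℝ) / 3) ≤ i) (h1 : i ≤ m ^ ((2 : ℝ) / 3)) :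
    0 < 4 * i ^ 6 + (4 * i ^ 3 * m ^ 3 - 2 * m ^ 5) + (38 * i ^ 3 * m ^ 2 - 9 * m ^ 4)
      + (14 * i ^ 2 * m ^ 3 - 11 * m ^ 3) + 12 * i ^ 5 * m + 18 * i ^ 5 + 44 * i ^ 4 * m
      + (21 * i ^ 4 - 10 * i ^ 3) + 60 * i ^ 3 * m + (35 * i ^ 2 * m - 21 * i * m)
      + 12 * i ^ 4 * m ^ 2 + (64 * i ^ 2 * m ^ 2 - 10 * m ^ 2 - 22 * m)
      + 16 * i * m ^ 3 + (34 * i * m ^ 2 - 27 * i ^ 2 - 6 * i) := by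
  have hm0 : (0:ℝ) ≤ m := by linarith
  have hm2 : (0:ℝ) ≤ m ^ 2 / 2 := by positivity
  have e1 : ((m ^ 2 / 2) ^ ((1:ℝ)/3)) ^ (3:ℕ) = m ^ 2 / 2 := by
    rw [← Real.rpow_natCast _ 3, ← Real.rpow_mul hm2]; norm_num
  have e2 : (m ^ ((2:ℝ)/3)) ^ (3:ℕ) = m ^ 2 := by
    rw [← Real.rpow_natCast _ 3, ← Real.rpow_mul hm0]
    norm_num
  have hi0 : (0:ℝ) ≤ (m ^ 2 / 2) ^ ((1:ℝ)/3) := Real.rpow_nonneg hm2 _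
  have hi0' : (0:ℝ) ≤ i := le_trans hi0 h0
  have hA : m ^ 2 / 2 ≤ i ^ 3 := by
    calc m ^ 2 / 2 = ((m ^ 2 / 2) ^ ((1:ℝ)/3)) ^ (3:ℕ) := e1.symm
    _ ≤ i ^ 3 := pow_le_pow_left₀ hi0 h0 3
  have hB : i ^ 3 ≤ m ^ 2 := by
    calc i ^ 3 ≤ (m ^ ((2:ℝ)/3)) ^ (3:ℕ) := pow_le_pow_left₀ hi0' h1 3
    _ = m ^ 2 := e2
  have hi1 : 1 ≤ i := by nlinarith [sq_nonneg i, sq_nonneg (i-1), sq_nonneg (i+1)]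
  nlinarith [mul_le_mul_of_nonneg_right hA (by positivity : (0:ℝ) ≤ m^3),
    mul_le_mul_of_nonneg_right hA (by positivity : (0:ℝ) ≤ m^2),
    mul_le_mul_of_nonneg_right hA hm0,
    mul_nonneg hi0' hm0, sq_nonneg i, sq_nonneg m,
    mul_le_mul_of_nonneg_right hi1 (by positivity : (0:ℝ) ≤ i*m),
    mul_le_mul_of_nonneg_right hi1 (by positivity : (0:ℝ) ≤ i^2*m^3)]
end

section
/- For all integers m ≥ 0, the Boros-Moll polynomial satisfies the double-sum/single-sum identity: ∑_{j,k} C(2m+1, 2j)·C(m−j, k)·C(2k+2j, k+j)·(a+1)^j(a−1)^k / 2^{3(k+j)} = 2^{-2m} ∑_{k=0}^{m} 2^k·C(2m−2k, m−k)·C(m+k, k)·(a+1)^k, as polynomials in the variable a. -/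
/-!
Write `a - 1 = (a + 1) - 2` and expand binomially. For fixed `j` a binomial transform turns the
sum over `k` into a sum over `i` whose inner sums `∑ t, C(p, t) (-1/4)^t C(2(q + t), q + t)`
equal `S(p, q) / 4^p`, where `S(p, q) = (2p)! (2q)! / (p! q! (p + q)!)` is Gessel's super Catalan
number (Pascal induction on `p`). After collecting powers of `a + 1` it remains to show
`∑ j, C(2m+1, 2j) C(m-j, n-j) = 4^n C(m+n, 2n)`, the coefficient form of
`∑ j, C(2m+1, 2j) x^j (1+x)^(m-j) = b_m(4x)` with `b_m` the Morgan–Voyce polynomial. At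
`x = v²`, with `u² = 1 + v²`, both sides times `2u` equal `(u+v)^(2m+1) + (u-v)^(2m+1)`: on the
left by taking the even part of the binomial expansion, on the right by the recurrence
`b_(m+2) = (X+2) b_(m+1) - b_m`.
-/

open Finset
open scoped Nat

theorem sum_range_two_mul {M : Type*} [AddCommMonoid M] (n : ℕ) (f : ℕ → M) :
    ∑ i ∈ range (2 * n), f i = ∑ j ∈ range n, (f (2 * j) + f (2 * j + 1)) := by
  induction n with
  | zero => simp
  | succ n ih =>
    rw [mul_add, mul_one, sum_range_succ, sum_range_succ, sum_range_succ, ih, add_assoc]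

theorem add_pow_add_sub_pow_two_mul_add_one {R : Type*} [CommRing R] (u v : R) (m : ℕ) :
    (u + v) ^ (2 * m + 1) + (u - v) ^ (2 * m + 1) =
      2 * ∑ j ∈ range (m + 1),
        ((2 * m + 1).choose (2 * j) : R) * v ^ (2 * j) * u ^ (2 * m + 1 - 2 * j) := by
  rw [add_comm u, sub_eq_add_neg, add_comm u, add_pow, add_pow, ← sum_add_distrib,
    show 2 * m + 1 + 1 = 2 * (m + 1) by ring, sum_range_two_mul, mul_sum]
  refine sum_congr rfl fun j _ => ?_
  simp only [pow_succ, pow_mul, neg_mul, mul_neg]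
  ring

theorem sum_choose_mul_add_pow {R : Type*} [CommSemiring R] (N : ℕ) (f : ℕ → R) (y z : R) :
    ∑ k ∈ range (N + 1), (N.choose k : R) * (f k * (y + z) ^ k) =
      ∑ i ∈ range (N + 1), (N.choose i : R) * y ^ i *
        ∑ t ∈ range (N + 1 - i), ((N - i).choose t : R) * (z ^ t * f (i + t)) := by
  have expand : ∀ k ∈ range (N + 1), (N.choose k : R) * (f k * (y + z) ^ k) =
      ∑ i ∈ range (k + 1), (N.choose i : R) * y ^ i *
        (((N - i).choose (k - i) : R) * (z ^ (k - i) * f (i + (k - i)))) := by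
    intro k _
    rw [add_pow, mul_sum, mul_sum]
    refine sum_congr rfl fun i hi => ?_
    have hik : i ≤ k := mem_range_succ_iff.mp hi
    have hchoose : (N.choose k : R) * k.choose i = N.choose i * (N - i).choose (k - i) := by
      rw [← Nat.cast_mul, ← Nat.cast_mul, Nat.choose_mul hik]
    calc (N.choose k : R) * (f k * (y ^ i * z ^ (k - i) * k.choose i))
        = (N.choose k * k.choose i : R) * y ^ i * (z ^ (k - i) * f k) := by ring
      _ = _ := by rw [hchoose, Nat.add_sub_cancel' hik]; ring
  rw [sum_congr rfl expand]
  exact (sum_range_diag_flip (N + 1) fun i t => (N.choose i : R) * y ^ i *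
    (((N - i).choose t : R) * (z ^ t * f (i + t)))).trans (by simp only [mul_sum])

theorem Nat.cast_centralBinom (n : ℕ) : (n.centralBinom : ℝ) = (2 * n)! / (n ! * n !) := by
  rw [Nat.centralBinom_eq_two_mul_choose, Nat.cast_choose ℝ (by omega),
    show 2 * n - n = n by omega]

noncomputable def superCatalan (p q : ℕ) : ℝ :=
  (2 * p)! * (2 * q)! / (p ! * q ! * (p + q)!)

theorem sum_choose_mul_neg_quarter_pow_mul_centralBinom (p q : ℕ) :
    ∑ t ∈ range (p + 1), (p.choose t : ℝ) * ((-1 / 4) ^ t * ((q + t).centralBinom : ℝ)) =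
      superCatalan p q / 4 ^ p := by
  induction p generalizing q with
  | zero => simp [superCatalan, Nat.cast_centralBinom]
  | succ p ih =>
    rw [sum_choose_succ_mul (fun t _ => (-1 / 4 : ℝ) ^ t * ((q + t).centralBinom : ℝ))]
    have shift : ∑ t ∈ range (p + 1), (p.choose t : ℝ) * ((-1 / 4) ^ (t + 1) *
        ((q + (t + 1)).centralBinom : ℝ)) = -1 / 4 * ∑ t ∈ range (p + 1),
          (p.choose t : ℝ) * ((-1 / 4) ^ t * ((q + 1 + t).centralBinom : ℝ)) := by
      rw [mul_sum]
      refine sum_congr rfl fun t _ => ?_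
      rw [add_right_comm q, ← add_assoc, pow_succ]
      ring
    rw [shift, ih, ih, superCatalan, superCatalan, superCatalan,
      show 2 * (p + 1) = 2 * p + 1 + 1 by ring, show 2 * (q + 1) = 2 * q + 1 + 1 by ring,
      show p + 1 + q = p + q + 1 by ring, show p + (q + 1) = p + q + 1 by ring]
    simp only [Nat.factorial_succ]
    push_cast
    field_simp
    ring

theorem choose_mul_superCatalan {m n : ℕ} (hn : n ≤ m) :
    ((m + n).choose (2 * n) : ℝ) * superCatalan (m - n) n =
      (m + n).choose n * (2 * m - 2 * n).choose (m - n) := by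
  obtain ⟨p, rfl⟩ := Nat.exists_eq_add_of_le hn
  rw [superCatalan, Nat.add_sub_cancel_left, show 2 * (n + p) - 2 * n = 2 * p by omega,
    Nat.cast_choose ℝ (show 2 * n ≤ n + p + n by omega),
    Nat.cast_choose ℝ (show n ≤ n + p + n by omega),
    Nat.cast_choose ℝ (show p ≤ 2 * p by omega),
    show n + p + n - 2 * n = p by omega, show n + p + n - n = n + p by omega,
    show 2 * p - p = p by omega, add_comm p n]
  field_simp

theorem sum_choose_mul_centralBinom_mul_add_pow {N M : ℕ} (hNM : N < M) (q : ℕ) (w : ℝ) :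
    ∑ k ∈ range M, (N.choose k : ℝ) * ((q + k).centralBinom * (w + -1 / 4) ^ k) =
      ∑ i ∈ range (N + 1),
        (N.choose i : ℝ) * w ^ i * (superCatalan (N - i) (q + i) / 4 ^ (N - i)) := by
  rw [← sum_subset (range_subset_range.mpr hNM) fun k _ hk => by
    rw [Nat.choose_eq_zero_of_lt (by simpa using hk), Nat.cast_zero, zero_mul]]
  rw [sum_choose_mul_add_pow]
  refine sum_congr rfl fun i hi => ?_
  rw [show N + 1 - i = N - i + 1 by have := mem_range.mp hi; omega,
    ← sum_choose_mul_neg_quarter_pow_mul_centralBinom]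
  simp only [add_assoc]

section MorganVoyce

open Polynomial

noncomputable def morganVoyce (m : ℕ) : ℝ[X] :=
  ∑ n ∈ range (m + 1), C ((m + n).choose (2 * n) : ℝ) * X ^ n

theorem coeff_morganVoyce (m n : ℕ) : (morganVoyce m).coeff n = (m + n).choose (2 * n) := by
  simp only [morganVoyce, finsetSum_coeff, coeff_C_mul_X_pow, sum_ite_eq, mem_range]
  split_ifs with h
  · rfl
  · rw [Nat.choose_eq_zero_of_lt (by omega), Nat.cast_zero]

theorem morganVoyce_zero : morganVoyce 0 = 1 := by
  simp [morganVoyce]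

theorem morganVoyce_one : morganVoyce 1 = X + 1 := by
  simp [morganVoyce, sum_range_succ, add_comm]

theorem morganVoyce_add_two (m : ℕ) :
    morganVoyce (m + 2) = (X + 2) * morganVoyce (m + 1) - morganVoyce m := by
  ext n
  rcases n with _ | n
  · norm_num [coeff_morganVoyce]
  · simp only [coeff_sub, add_mul, coeff_add, coeff_X_mul, coeff_ofNat_mul, coeff_morganVoyce]
    rw [show m + 2 + (n + 1) = m + n + 3 by ring, show m + 1 + (n + 1) = m + n + 2 by ring,
      show m + 1 + n = m + n + 1 by ring, show m + (n + 1) = m + n + 1 by ring,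
      show 2 * (n + 1) = 2 * n + 2 by ring]
    simp only [Nat.choose_succ_succ']
    push_cast
    ring

theorem two_mul_mul_eval_morganVoyce {u v : ℝ} (h : u ^ 2 = 1 + v ^ 2) (m : ℕ) :
    2 * u * (morganVoyce m).eval (4 * v ^ 2) = (u + v) ^ (2 * m + 1) + (u - v) ^ (2 * m + 1) := by
  induction m using Nat.twoStepInduction with
  | zero =>
    rw [morganVoyce_zero, eval_one]
    ring
  | one =>
    rw [morganVoyce_one, eval_add, eval_X, eval_one]
    linear_combination (-2 * u) * h
  | more m ih₀ ih₁ =>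
    -- `(u + v) (u - v) = 1` and `(u + v) ^ 2 + (u - v) ^ 2 = 4 v ^ 2 + 2`
    rw [morganVoyce_add_two, eval_sub, eval_mul, eval_add, eval_X, eval_ofNat]
    linear_combination (4 * v ^ 2 + 2) * ih₁ - ih₀ +
      (-2 * ((u + v) ^ (2 * m + 3) + (u - v) ^ (2 * m + 3)) +
        (u ^ 2 - v ^ 2 + 1) * ((u + v) ^ (2 * m + 1) + (u - v) ^ (2 * m + 1))) * h

noncomputable def evenBinomPoly (m : ℕ) : ℝ[X] :=
  ∑ j ∈ range (m + 1), C ((2 * m + 1).choose (2 * j) : ℝ) * (X ^ j * (1 + X) ^ (m - j))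

theorem two_mul_mul_eval_evenBinomPoly {u v : ℝ} (h : u ^ 2 = 1 + v ^ 2) (m : ℕ) :
    2 * u * (evenBinomPoly m).eval (v ^ 2) = (u + v) ^ (2 * m + 1) + (u - v) ^ (2 * m + 1) := by
  rw [add_pow_add_sub_pow_two_mul_add_one, evenBinomPoly, eval_finsetSum, mul_sum, mul_sum]
  refine sum_congr rfl fun j hj => ?_
  have hjm : j ≤ m := mem_range_succ_iff.mp hj
  rw [show 2 * m + 1 - 2 * j = 2 * (m - j) + 1 by omega, pow_succ u, pow_mul u, h]
  simp only [eval_mul, eval_C, eval_pow, eval_add, eval_one, eval_X]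
  ring

theorem evenBinomPoly_eq_comp (m : ℕ) : evenBinomPoly m = (morganVoyce m).comp (C 4 * X) := by
  refine eq_of_infinite_eval_eq _ _ ((Set.Ici_infinite 0).mono fun x (hx : 0 ≤ x) => ?_)
  obtain ⟨v, rfl⟩ : ∃ v, x = v ^ 2 := ⟨√x, (Real.sq_sqrt hx).symm⟩
  have hu : √(1 + v ^ 2) ^ 2 = 1 + v ^ 2 := Real.sq_sqrt (by positivity)
  have hu0 : 2 * √(1 + v ^ 2) ≠ 0 := by positivity
  refine mul_left_cancel₀ hu0 ?_
  rw [eval_comp, eval_mul, eval_C, eval_X, two_mul_mul_eval_evenBinomPoly hu,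
    two_mul_mul_eval_morganVoyce hu]

theorem sum_choose_two_mul_mul_choose_sub {m n : ℕ} (hn : n ≤ m) :
    ∑ j ∈ range (n + 1), (2 * m + 1).choose (2 * j) * (m - j).choose (n - j) =
      4 ^ n * (m + n).choose (2 * n) := by
  have hcoeff := congrArg (coeff · n) (evenBinomPoly_eq_comp m)
  simp only [evenBinomPoly, finsetSum_coeff, coeff_C_mul, coeff_X_pow_mul', coeff_one_add_X_pow,
    mul_ite, mul_zero, ← sum_filter, comp_C_mul_X_coeff, coeff_morganVoyce] at hcoeff
  rw [show (range (m + 1)).filter (· ≤ n) = range (n + 1) by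
    ext; simp only [mem_filter, mem_range]; omega] at hcoeff
  exact_mod_cast hcoeff.trans (mul_comm _ _)

end MorganVoyce

theorem four_pow_mul_choose_mul_superCatalan {m n : ℕ} (hn : n ≤ m) (y : ℝ) :
    4 ^ n * ((m + n).choose (2 * n) : ℝ) *
        ((y / 8) ^ n * (superCatalan (m - n) n / 4 ^ (m - n))) =
      ((2 : ℝ) ^ (2 * m))⁻¹ *
        (2 ^ n * (2 * m - 2 * n).choose (m - n) * (m + n).choose n * y ^ n) := by
  have h4n : (4 : ℝ) ^ n = (2 ^ n) ^ 2 := by rw [← pow_mul, mul_comm, pow_mul]; norm_num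
  have h8n : (8 : ℝ) ^ n = (2 ^ n) ^ 3 := by rw [← pow_mul, mul_comm, pow_mul]; norm_num
  have h4m : (2 : ℝ) ^ (2 * m) = (2 ^ n) ^ 2 * 4 ^ (m - n) := by
    rw [← h4n, ← pow_add, Nat.add_sub_cancel' hn, pow_mul]; norm_num
  rw [h4m, h4n, div_pow, h8n]
  field_simp
  linear_combination y ^ n * choose_mul_superCatalan hn

theorem mul_choose_mul_pow_div_two_pow (A B a : ℝ) (j k : ℕ) :
    A * B * ((2 * k + 2 * j).choose (k + j) : ℝ) * (a + 1) ^ j * (a - 1) ^ k / 2 ^ (3 * (k + j)) =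
      A * ((a + 1) / 8) ^ j * (B * ((j + k).centralBinom * ((a + 1) / 8 + -1 / 4) ^ k)) := by
  rw [show 2 * k + 2 * j = 2 * (j + k) by ring, add_comm k j,
    ← Nat.centralBinom_eq_two_mul_choose,
    show (2 : ℝ) ^ (3 * (j + k)) = 8 ^ j * 8 ^ k by rw [pow_mul, pow_add]; norm_num,
    show (a + 1) / 8 + -1 / 4 = (a - 1) / 8 by ring, div_pow, div_pow]
  ring

theorem boros_moll_double_sum (m : ℕ) (a : ℝ) :
    ∑ j ∈ Finset.range (m + 1), ∑ k ∈ Finset.range (m + 1),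
        (Nat.choose (2 * m + 1) (2 * j) : ℝ) * (Nat.choose (m - j) k : ℝ) *
          (Nat.choose (2 * k + 2 * j) (k + j) : ℝ) * (a + 1) ^ j * (a - 1) ^ k / 2 ^ (3 * (k + j))
      = ((2 : ℝ) ^ (2 * m))⁻¹ * ∑ k ∈ Finset.range (m + 1),
          2 ^ k * (Nat.choose (2 * m - 2 * k) (m - k) : ℝ) * (Nat.choose (m + k) k : ℝ) *
            (a + 1) ^ k := by
  set w := (a + 1) / 8
  let g : ℕ → ℕ → ℝ := fun j i => (2 * m + 1).choose (2 * j) * (m - j).choose i *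
    (w ^ (j + i) * (superCatalan (m - j - i) (j + i) / 4 ^ (m - j - i)))
  calc _ = ∑ j ∈ range (m + 1), ∑ i ∈ range (m + 1 - j), g j i := by
        refine sum_congr rfl fun j hj => ?_
        have hjm : j ≤ m := mem_range_succ_iff.mp hj
        simp_rw [mul_choose_mul_pow_div_two_pow]
        rw [← mul_sum, sum_choose_mul_centralBinom_mul_add_pow (by omega : m - j < m + 1),
          ← Nat.sub_add_comm hjm, mul_sum]
        refine sum_congr rfl fun i _ => ?_
        simp only [g, pow_add]
        ring
    _ = ∑ n ∈ range (m + 1), ∑ j ∈ range (n + 1), g j (n - j) :=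
        (sum_range_diag_flip _ g).symm
    _ = ∑ n ∈ range (m + 1), 4 ^ n * ((m + n).choose (2 * n) : ℝ) *
          (w ^ n * (superCatalan (m - n) n / 4 ^ (m - n))) := by
        refine sum_congr rfl fun n hn => ?_
        have hA : (4 ^ n * (m + n).choose (2 * n) : ℝ) = ∑ j ∈ range (n + 1),
            ((2 * m + 1).choose (2 * j) * (m - j).choose (n - j) : ℝ) := by
          exact_mod_cast (sum_choose_two_mul_mul_choose_sub (mem_range_succ_iff.mp hn)).symm
        rw [hA, sum_mul]
        refine sum_congr rfl fun j hj => ?_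
        have hjn : j ≤ n := mem_range_succ_iff.mp hj
        simp only [g, Nat.add_sub_cancel' hjn, Nat.sub_sub_sub_cancel_right hjn]
    _ = _ := by
        rw [mul_sum]
        exact sum_congr rfl fun n hn =>
          four_pow_mul_choose_mul_superCatalan (mem_range_succ_iff.mp hn) _
end
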